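/- arXiv:math/0512633 — 5 statements merged into one kernel-verified Lean document; each statement's English description precedes it below -/
import Mathlib

section
/- Let E be a finite-dimensional real normed space and F a strongly convex Minkowski norm on E, i.e. F is a Minkowski norm, the function F² is twice continuously differentiable on E ∖ {0}, and for each y ≠ 0 the symmetric bilinear form g_y(u,v) := (1/2)·D²(F²)(y)[u,v] is positive definite. Then the Legendre transform is norm-preserving: for every y ≠ 0, F*(ℓ(y)) = F(y), where ℓ(y) := (1/2)·D(F²)(y) ∈ E* is half the Fréchet derivative of F² at y (equivalently ℓ(y) = g_y(y,·)). -/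
open Set

/-!
Write `G = F²`. Homogeneity gives Euler's identity `DG(y) y = 2 G(y)`, so the value `F(y)` of
the supremum is attained at `x = y`. For the upper bound it suffices, by homogeneity, to show
`DG(y) x ≤ 2 G(y)` when `F x = F y`. If the segment `[y, x]` avoids `0`, then `G` is convex
along it (its second derivative is positive semidefinite there), so
`DG(y)(x - y) ≤ G x - G y = 0`. Otherwise `x` is a nonpositive multiple of `y` and
`DG(y) x ≤ 0` by Euler's identity.
-/

section

variable {E : Type*} [NormedAddCommGroup E] [NormedSpace ℝ E]

theorem fderiv_apply_self_of_homogeneous {f : E → ℝ} {n : ℕ}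
    (hf : ∀ t : ℝ, 0 < t → ∀ z : E, f (t • z) = t ^ n * f z) {z : E}
    (hz : DifferentiableAt ℝ f z) : fderiv ℝ f z z = n * f z := by
  have hray : HasDerivAt (fun t : ℝ => f (t • z)) (fderiv ℝ f z z) 1 := by
    have hline : HasDerivAt (fun t : ℝ => t • z) z 1 := by
      simpa using (hasDerivAt_id (1 : ℝ)).smul_const z
    have hz' : HasFDerivAt f (fderiv ℝ f z) ((1 : ℝ) • z) := by
      rw [one_smul]
      exact hz.hasFDerivAt
    exact hz'.comp_hasDerivAt 1 hline
  have hpow : HasDerivAt (fun t : ℝ => t ^ n * f z) (n * f z) 1 := by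
    simpa using (hasDerivAt_pow n (1 : ℝ)).mul_const (f z)
  have heq : (fun t : ℝ => t ^ n * f z) =ᶠ[nhds 1] fun t => f (t • z) := by
    filter_upwards [Ioi_mem_nhds zero_lt_one] with t ht
    exact (hf t ht z).symm
  exact hray.unique (hpow.congr_of_eventuallyEq heq.symm)

theorem fderiv_apply_sub_le_sub_of_segment {f : E → ℝ} {x y : E}
    (hf : ∀ z ∈ segment ℝ y x, ContDiffAt ℝ 2 f z)
    (hf₂ : ∀ z ∈ segment ℝ y x, 0 ≤ fderiv ℝ (fderiv ℝ f) z (x - y) (x - y)) :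
    fderiv ℝ f y (x - y) ≤ f x - f y := by
  set c : ℝ → E := fun t => y + t • (x - y) with hc_def
  have hc : ∀ t ∈ Icc (0 : ℝ) 1, c t ∈ segment ℝ y x := fun t ht => by
    rw [segment_eq_image']
    exact ⟨t, ht, rfl⟩
  have hc' : ∀ t, HasDerivAt c (x - y) t := fun t =>
    (((hasDerivAt_id t).smul_const (x - y)).const_add y).congr_deriv (one_smul ℝ _)
  have hd₁ : ∀ t ∈ Icc (0 : ℝ) 1, HasDerivAt (f ∘ c) (fderiv ℝ f (c t) (x - y)) t :=
    fun t ht =>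
      ((hf _ (hc t ht)).differentiableAt two_ne_zero).hasFDerivAt.comp_hasDerivAt t (hc' t)
  have hd₂ : ∀ t ∈ Icc (0 : ℝ) 1, HasDerivAt (fun s => fderiv ℝ f (c s) (x - y))
      (fderiv ℝ (fderiv ℝ f) (c t) (x - y) (x - y)) t := fun t ht => by
    have hdf : DifferentiableAt ℝ (fderiv ℝ f) (c t) :=
      ((hf _ (hc t ht)).fderiv_right (m := 1) (by norm_num)).differentiableAt one_ne_zero
    simpa using (hdf.hasFDerivAt.comp_hasDerivAt t (hc' t)).clm_apply (hasDerivAt_const t (x - y))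
  have hconv : ConvexOn ℝ (Icc 0 1) (f ∘ c) :=
    convexOn_of_hasDerivWithinAt2_nonneg (convex_Icc 0 1)
      (fun t ht => (hd₁ t ht).continuousAt.continuousWithinAt)
      (fun t ht => (hd₁ t (interior_subset ht)).hasDerivWithinAt)
      (fun t ht => (hd₂ t (interior_subset ht)).hasDerivWithinAt)
      (fun t ht => hf₂ _ (hc t (interior_subset ht)))
  have hslope := hconv.le_slope_of_hasDerivAt (left_mem_Icc.2 zero_le_one)
    (right_mem_Icc.2 zero_le_one) zero_lt_one (hd₁ 0 (left_mem_Icc.2 zero_le_one))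
  simpa [hc_def, slope_def_field] using hslope

variable {F : E → ℝ}

theorem fderiv_sq_apply_self (hFhom : ∀ t : ℝ, 0 < t → ∀ x : E, F (t • x) = t * F x) {y : E}
    (hy : DifferentiableAt ℝ (fun x : E => F x ^ 2) y) :
    fderiv ℝ (fun x : E => F x ^ 2) y y = 2 * F y ^ 2 := by
  have := fderiv_apply_self_of_homogeneous (fun t ht z => by rw [hFhom t ht, mul_pow]) hy
  exact_mod_cast this

theorem fderiv_sq_apply_le_of_eq (hFhom : ∀ t : ℝ, 0 < t → ∀ x : E, F (t • x) = t * F x)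
    (hC2 : ∀ y : E, y ≠ 0 → ContDiffAt ℝ 2 (fun x : E => F x ^ 2) y)
    (hconv : ∀ z : E, z ≠ 0 → ∀ u : E, 0 ≤ fderiv ℝ (fderiv ℝ fun x : E => F x ^ 2) z u u)
    {x y : E} (hy : y ≠ 0) (hxy : F x = F y) :
    fderiv ℝ (fun z : E => F z ^ 2) y x ≤ 2 * F y ^ 2 := by
  have heuler := fderiv_sq_apply_self hFhom ((hC2 y hy).differentiableAt two_ne_zero)
  by_cases h0 : (0 : E) ∈ segment ℝ y x
  · obtain ⟨r, hr, hx⟩ :=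
      (mem_segment_iff_sameRay.1 h0).exists_nonneg_left (by simpa using hy)
    rw [zero_sub, sub_zero] at hx
    subst hx
    rw [map_smul, map_neg, heuler, smul_eq_mul]
    nlinarith [sq_nonneg (F y)]
  · have hseg : ∀ z ∈ segment ℝ y x, z ≠ 0 := fun z hz hz0 => h0 (hz0 ▸ hz)
    have := fderiv_apply_sub_le_sub_of_segment (fun z hz => hC2 z (hseg z hz))
      (fun z hz => hconv z (hseg z hz) _)
    rw [map_sub, heuler, hxy] at this
    linarith

theorem fderiv_sq_apply_le_mul (hFpos : ∀ x : E, x ≠ 0 → 0 < F x)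
    (hFhom : ∀ t : ℝ, 0 < t → ∀ x : E, F (t • x) = t * F x)
    (hC2 : ∀ y : E, y ≠ 0 → ContDiffAt ℝ 2 (fun x : E => F x ^ 2) y)
    (hconv : ∀ z : E, z ≠ 0 → ∀ u : E, 0 ≤ fderiv ℝ (fderiv ℝ fun x : E => F x ^ 2) z u u)
    {x y : E} (hx : x ≠ 0) (hy : y ≠ 0) :
    fderiv ℝ (fun z : E => F z ^ 2) y x ≤ 2 * F y * F x := by
  have hFx := hFpos x hx
  have hscale : 0 < F y / F x := div_pos (hFpos y hy) hFx
  have hle := fderiv_sq_apply_le_of_eq hFhom hC2 hconv (x := (F y / F x) • x) hy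
    (by rw [hFhom _ hscale]; field_simp)
  rw [map_smul, smul_eq_mul, div_mul_eq_mul_div, div_le_iff₀ hFx] at hle
  exact le_of_mul_le_mul_left (by linarith) (hFpos y hy)

end

theorem legendre_norm_preserving_general {E : Type*} [NormedAddCommGroup E] [NormedSpace ℝ E]
    (F : E → ℝ)
    (hFpos : ∀ x : E, x ≠ 0 → 0 < F x)
    (hFhom : ∀ t : ℝ, 0 < t → ∀ x : E, F (t • x) = t * F x)
    (hC2 : ∀ y : E, y ≠ 0 → ContDiffAt ℝ 2 (fun x : E => (F x) ^ 2) y)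
    (hposdef : ∀ y : E, y ≠ 0 → ∀ u : E, u ≠ 0 →
      0 < (1 / 2 : ℝ) * (fderiv ℝ (fun x : E => fderiv ℝ (fun z : E => (F z) ^ 2) x) y u u))
    (y : E) (hy : y ≠ 0) :
    (⨆ x : {x : E // x ≠ 0},
        ((1 / 2 : ℝ) • fderiv ℝ (fun z : E => (F z) ^ 2) y) (x : E) / F (x : E)) = F y := by
  have hconv : ∀ z : E, z ≠ 0 → ∀ u : E,
      0 ≤ fderiv ℝ (fderiv ℝ fun x : E => F x ^ 2) z u u := fun z hz u => by
    rcases eq_or_ne u 0 with rfl | hu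
    · simp
    · linarith [hposdef z hz u hu]
  set φ : E → ℝ := fun x => ((1 / 2 : ℝ) • fderiv ℝ (fun z : E => F z ^ 2) y) x / F x with hφ
  have hφy : φ y = F y := by
    have hFy := hFpos y hy
    simp only [hφ, smul_apply, smul_eq_mul,
      fderiv_sq_apply_self hFhom ((hC2 y hy).differentiableAt two_ne_zero)]
    field_simp
  have hmax : IsMaxOn φ {x | x ≠ 0} y := isMaxOn_iff.2 fun x hx => by
    rw [hφy, hφ, div_le_iff₀ (hFpos x hx), smul_apply, smul_eq_mul]
    linarith [fderiv_sq_apply_le_mul hFpos hFhom hC2 hconv hx hy]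
  exact (hmax.iSup_eq hy).trans hφy

/-- **Lemma 3.1 (norm-preserving part).** Let `F` be a strongly convex Minkowski norm on a
finite-dimensional real normed space `E`: `F` is continuous, positive away from `0`,
positively homogeneous of degree one, `F²` is `C²` away from `0`, and for each `y ≠ 0`
the fundamental form `g_y(u,v) = ½ D²(F²)(y)[u,v]` is positive definite.  Then the
Legendre transform `ℓ(y) = ½ D(F²)(y)` is norm-preserving: `F*(ℓ(y)) = F(y)` for all
`y ≠ 0`, where `F*(ξ) = ⨆_{x ≠ 0} ξ(x)/F(x)` is the dual norm. -/
theorem legendre_norm_preserving {E : Type*} [NormedAddCommGroup E] [NormedSpace ℝ E]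
    [FiniteDimensional ℝ E]
    (F : E → ℝ) (hFcont : Continuous F)
    (hFpos : ∀ x : E, x ≠ 0 → 0 < F x)
    (hFhom : ∀ t : ℝ, 0 < t → ∀ x : E, F (t • x) = t * F x)
    (hC2 : ∀ y : E, y ≠ 0 → ContDiffAt ℝ 2 (fun x : E => (F x) ^ 2) y)
    (hposdef : ∀ y : E, y ≠ 0 → ∀ u : E, u ≠ 0 →
      0 < (1 / 2 : ℝ) * (fderiv ℝ (fun x : E => fderiv ℝ (fun z : E => (F z) ^ 2) x) y u u))
    (y : E) (hy : y ≠ 0) :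
    (⨆ x : {x : E // x ≠ 0},
        ((1 / 2 : ℝ) • fderiv ℝ (fun z : E => (F z) ^ 2) y) (x : E) / F (x : E)) = F y :=
  legendre_norm_preserving_general F hFpos hFhom hC2 hposdef y hy
end

section
/- Let c < 0 and set a := √(−c). Let R > 0, let u : ℝ → ℝ be differentiable on (0,R] with u'(r) ≥ −c − u(r)² for all r ∈ (0,R], and suppose there is ε ∈ (0,R] with u(ε) ≥ a·coth(a·ε). Then u(r) ≥ a·coth(a·r) for all r ∈ [ε, R]. -/
/-!
`v r := a coth (a r)` solves `v' = -c - v²` exactly, so `w := v - u` satisfies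
`w' ≤ u² - v² = -(u + v) w`; as `u + v` is bounded on the compact interval `[ε, R]`, `w' ≤ K w`
wherever `w > 0`. Fencing `w` by `δ e^{(K+1)(r-ε)}` and letting `δ → 0` turns `w(ε) ≤ 0` into
`w ≤ 0` on `[ε, R]`.
-/

open Set Real

theorem nonpos_of_deriv_right_le_mul_of_pos {w w' : ℝ → ℝ} {a b K : ℝ}
    (hw : ContinuousOn w (Icc a b)) (hw' : ∀ x ∈ Ico a b, HasDerivWithinAt w (w' x) (Ici x) x)
    (ha : w a ≤ 0) (hK : ∀ x ∈ Ico a b, 0 < w x → w' x ≤ K * w x) :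
    ∀ x ∈ Icc a b, w x ≤ 0 := by
  have fence : ∀ δ > 0, ∀ x ∈ Icc a b, w x ≤ δ * exp ((K + 1) * (x - a)) := by
    intro δ hδ
    refine image_le_of_deriv_right_lt_deriv_boundary hw hw'
      (B' := fun x => (K + 1) * (δ * exp ((K + 1) * (x - a)))) ?_ (fun x => ?_) ?_
    · simpa using ha.trans hδ.le
    · have hlin : HasDerivAt (fun x => (K + 1) * (x - a)) (K + 1) x := by
        simpa using ((hasDerivAt_id x).sub_const a).const_mul (K + 1)
      exact (hlin.exp.const_mul δ).congr_deriv (by ring)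
    · intro x hx hcontact
      have hpos : 0 < w x := hcontact ▸ mul_pos hδ (exp_pos _)
      calc w' x ≤ K * w x := hK x hx hpos
        _ < (K + 1) * w x := by linarith
        _ = _ := by rw [hcontact]
  intro x hx
  refine le_of_forall_pos_le_add fun η hη => ?_
  have hE := exp_pos ((K + 1) * (x - a))
  simpa [div_mul_cancel₀ η hE.ne'] using fence (η / exp ((K + 1) * (x - a))) (by positivity) x hx

theorem riccati_subsolution_le_supersolution {u u' v v' : ℝ → ℝ} {a b c : ℝ}
    (hu : ContinuousOn u (Icc a b)) (hu' : ∀ x ∈ Ico a b, HasDerivWithinAt u (u' x) (Ici x) x)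
    (hv : ContinuousOn v (Icc a b)) (hv' : ∀ x ∈ Ico a b, HasDerivWithinAt v (v' x) (Ici x) x)
    (hsuper : ∀ x ∈ Ico a b, -c - u x ^ 2 ≤ u' x) (hsub : ∀ x ∈ Ico a b, v' x ≤ -c - v x ^ 2)
    (ha : v a ≤ u a) : ∀ x ∈ Icc a b, v x ≤ u x := by
  obtain ⟨K, hK⟩ := isCompact_Icc.exists_bound_of_continuousOn (hu.add hv)
  have hgrowth : ∀ x ∈ Ico a b, 0 < v x - u x → v' x - u' x ≤ K * (v x - u x) := by
    intro x hx hpos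
    have hsum : -(u x + v x) ≤ K := (neg_le_abs _).trans (hK x (Ico_subset_Icc_self hx))
    calc v' x - u' x ≤ -(u x + v x) * (v x - u x) := by linarith [hsuper x hx, hsub x hx]
      _ ≤ K * (v x - u x) := mul_le_mul_of_nonneg_right hsum hpos.le
  intro x hx
  exact sub_nonpos.1 <| nonpos_of_deriv_right_le_mul_of_pos (hv.sub hu)
    (fun x hx => (hv' x hx).sub (hu' x hx)) (sub_nonpos.2 ha) hgrowth x hx

theorem hasDerivAt_mul_cosh_div_sinh {a r : ℝ} (h : a * r ≠ 0) :
    HasDerivAt (fun x => a * (cosh (a * x) / sinh (a * x)))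
      (a ^ 2 - (a * (cosh (a * r) / sinh (a * r))) ^ 2) r := by
  have hs : sinh (a * r) ≠ 0 := sinh_ne_zero.2 h
  have hlin : HasDerivAt (fun x => a * x) a r := by simpa using (hasDerivAt_id r).const_mul a
  refine ((hlin.cosh.div hlin.sinh hs).const_mul a).congr_deriv ?_
  field_simp

theorem riccati_comparison_general (c : ℝ) (hc : c < 0) (R : ℝ)
    (u u' : ℝ → ℝ)
    (hu : ∀ r ∈ Set.Ioc (0 : ℝ) R, HasDerivAt u (u' r) r)
    (hriccati : ∀ r ∈ Set.Ioc (0 : ℝ) R, -c - (u r) ^ 2 ≤ u' r)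
    (ε : ℝ) (hε : ε ∈ Set.Ioc (0 : ℝ) R)
    (hinit : Real.sqrt (-c) *
        (Real.cosh (Real.sqrt (-c) * ε) / Real.sinh (Real.sqrt (-c) * ε)) ≤ u ε) :
    ∀ r ∈ Set.Icc ε R,
      Real.sqrt (-c) *
        (Real.cosh (Real.sqrt (-c) * r) / Real.sinh (Real.sqrt (-c) * r)) ≤ u r := by
  set a := √(-c)
  have ha : 0 < a := sqrt_pos.2 (neg_pos.2 hc)
  have ha2 : a ^ 2 = -c := sq_sqrt (neg_nonneg.2 hc.le)
  have hIcc : Icc ε R ⊆ Ioc 0 R := fun x hx => ⟨hε.1.trans_le hx.1, hx.2⟩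
  have hIco : Ico ε R ⊆ Ioc 0 R := Ico_subset_Icc_self.trans hIcc
  have hv x (hx : x ∈ Ioc 0 R) := ha2 ▸ hasDerivAt_mul_cosh_div_sinh (mul_pos ha hx.1).ne'
  exact riccati_subsolution_le_supersolution
    (fun x hx => (hu x (hIcc hx)).continuousAt.continuousWithinAt)
    (fun x hx => (hu x (hIco hx)).hasDerivWithinAt)
    (fun x hx => (hv x (hIcc hx)).continuousAt.continuousWithinAt)
    (fun x hx => (hv x (hIco hx)).hasDerivWithinAt)
    (fun x hx => hriccati x (hIco hx)) (fun _ _ => le_rfl) hinit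

/-- **Riccati comparison (analytic core of Theorem 5.2).** Let `c < 0`, `a = √(-c)`,
`R > 0`, and let `u` be differentiable on `(0,R]` with `u' ≥ -c - u²` there.  If
`u(ε) ≥ a·coth(a·ε)` for some `ε ∈ (0,R]`, then `u(r) ≥ a·coth(a·r)` for all
`r ∈ [ε,R]`. -/
theorem riccati_comparison (c : ℝ) (hc : c < 0) (R : ℝ) (hR : 0 < R)
    (u u' : ℝ → ℝ)
    (hu : ∀ r ∈ Set.Ioc (0 : ℝ) R, HasDerivAt u (u' r) r)
    (hriccati : ∀ r ∈ Set.Ioc (0 : ℝ) R, -c - (u r) ^ 2 ≤ u' r)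
    (ε : ℝ) (hε : ε ∈ Set.Ioc (0 : ℝ) R)
    (hinit : Real.sqrt (-c) *
        (Real.cosh (Real.sqrt (-c) * ε) / Real.sinh (Real.sqrt (-c) * ε)) ≤ u ε) :
    ∀ r ∈ Set.Icc ε R,
      Real.sqrt (-c) *
        (Real.cosh (Real.sqrt (-c) * r) / Real.sinh (Real.sqrt (-c) * r)) ≤ u r :=
  riccati_comparison_general c hc R u u' hu hriccati ε hε hinit
end

section
/- Let c, Λ ∈ ℝ, let n ≥ 2 be an integer, and let R > 0, with R ≤ π/√c in case c > 0. Let σ : ℝ → ℝ be positive and differentiable on (0,R) and satisfy σ'(r)/σ(r) ≥ (n−1)·ct_c(r) − Λ for all r ∈ (0,R). Then the function r ↦ σ(r)·e^{Λr}/s_c(r)^{n−1} is monotone nondecreasing on (0,R). -/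
/-- The comparison function `s_c`: `sin(√c·t)` for `c > 0`, `t` for `c = 0`, and
`sinh(√(-c)·t)` for `c < 0`. -/
noncomputable def sc (c t : ℝ) : ℝ :=
  if 0 < c then Real.sin (Real.sqrt c * t)
  else if c = 0 then t
  else Real.sinh (Real.sqrt (-c) * t)

/-- The comparison function `ct_c = s_c'/s_c`: `√c·cot(√c·t)` for `c > 0`, `1/t` for
`c = 0`, and `√(-c)·coth(√(-c)·t)` for `c < 0`. -/
noncomputable def ctc (c t : ℝ) : ℝ :=
  if 0 < c then Real.sqrt c * (Real.cos (Real.sqrt c * t) / Real.sin (Real.sqrt c * t))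
  else if c = 0 then 1 / t
  else Real.sqrt (-c) * (Real.cosh (Real.sqrt (-c) * t) / Real.sinh (Real.sqrt (-c) * t))


/-! The ratio `f(r) = σ(r) e^{Λr} / s_c(r)^{n-1}` has logarithmic derivative
`σ'/σ + Λ - (n-1) ct_c`, which is nonnegative by hypothesis; `s_c > 0` on `(0, R)` because
`√c·R ≤ π` when `c > 0`. -/

open Real

lemma sc_pos {c r : ℝ} (hr : 0 < r) (hrc : 0 < c → r < π / √c) : 0 < sc c r := by
  unfold sc
  split_ifs with hc hc0
  · have hsqrt : 0 < √c := sqrt_pos.mpr hc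
    exact sin_pos_of_pos_of_lt_pi (by positivity) ((lt_div_iff₀' hsqrt).mp (hrc hc))
  · exact hr
  · have hsqrt : 0 < √(-c) := sqrt_pos.mpr (neg_pos.mpr ((not_lt.mp hc).lt_of_ne hc0))
    exact sinh_pos_iff.mpr (by positivity)

lemma hasDerivAt_sc {c r : ℝ} (hr : sc c r ≠ 0) : HasDerivAt (sc c) (ctc c r * sc c r) r := by
  unfold sc ctc at *
  split_ifs at * with hc hc0
  · refine ((hasDerivAt_id' r).const_mul √c).sin.congr_deriv ?_
    field_simp
  · refine (hasDerivAt_id r).congr_deriv ?_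
    field_simp
  · refine ((hasDerivAt_id' r).const_mul √(-c)).sinh.congr_deriv ?_
    field_simp

lemma hasDerivAt_mul_exp_div_pow {f g : ℝ → ℝ} {f' g' Λ r : ℝ} (k : ℕ)
    (hf : HasDerivAt f f' r) (hg : HasDerivAt g g' r) (hg0 : g r ≠ 0) :
    HasDerivAt (fun x => f x * exp (Λ * x) / g x ^ k)
      (exp (Λ * r) / g r ^ k * (f' + Λ * f r - k * f r * (g' / g r))) r := by
  have hexp : HasDerivAt (fun x => exp (Λ * x)) (exp (Λ * r) * Λ) r := by
    simpa using ((hasDerivAt_id r).const_mul Λ).exp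
  refine ((hf.fun_mul hexp).fun_div (hg.fun_pow k) (pow_ne_zero k hg0)).congr_deriv ?_
  rcases k with _ | k
  · simp only [pow_zero, div_one, CharP.cast_eq_zero, zero_mul, sub_zero]
    ring
  · rw [Nat.add_sub_cancel, pow_succ]
    field_simp

theorem density_ratio_monotone_general (c Λ : ℝ) (n : ℕ) (hn : 2 ≤ n) (R : ℝ)
    (hRc : 0 < c → R ≤ Real.pi / Real.sqrt c)
    (σ σ' : ℝ → ℝ)
    (hσpos : ∀ r ∈ Set.Ioo (0 : ℝ) R, 0 < σ r)
    (hσderiv : ∀ r ∈ Set.Ioo (0 : ℝ) R, HasDerivAt σ (σ' r) r)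
    (hineq : ∀ r ∈ Set.Ioo (0 : ℝ) R, ((n : ℝ) - 1) * ctc c r - Λ ≤ σ' r / σ r) :
    MonotoneOn (fun r => σ r * Real.exp (Λ * r) / (sc c r) ^ (n - 1))
      (Set.Ioo (0 : ℝ) R) := by
  have hsc : ∀ r ∈ Set.Ioo (0 : ℝ) R, 0 < sc c r := fun r hr =>
    sc_pos hr.1 fun hc => hr.2.trans_le (hRc hc)
  have hderiv : ∀ r ∈ Set.Ioo (0 : ℝ) R, HasDerivAt
      (fun r => σ r * exp (Λ * r) / sc c r ^ (n - 1))
      (exp (Λ * r) / sc c r ^ (n - 1) * (σ' r + Λ * σ r - (n - 1 : ℕ) * σ r * ctc c r)) r :=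
    fun r hr => by
      have hs := (hsc r hr).ne'
      simpa only [mul_div_cancel_right₀ _ hs] using
        hasDerivAt_mul_exp_div_pow (Λ := Λ) (n - 1) (hσderiv r hr) (hasDerivAt_sc hs) hs
  refine monotoneOn_of_hasDerivWithinAt_nonneg (convex_Ioo 0 R)
    (fun r hr => (hderiv r hr).continuousAt.continuousWithinAt)
    (fun r hr => (hderiv r (interior_subset hr)).hasDerivWithinAt) fun r hr => ?_
  rw [interior_Ioo] at hr
  have hσ' : ((n - 1) * ctc c r - Λ) * σ r ≤ σ' r := (le_div_iff₀ (hσpos r hr)).mp (hineq r hr)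
  rw [Nat.cast_pred (by omega)]
  have hs := hsc r hr
  exact mul_nonneg (by positivity) (by linarith)

/-- **Monotonicity step in Theorem 6.1.** Let `c, Λ ∈ ℝ`, `n ≥ 2`, `R > 0` with
`R ≤ π/√c` if `c > 0`.  If `σ > 0` is differentiable on `(0,R)` with
`σ'/σ ≥ (n-1)·ct_c - Λ` there, then `r ↦ σ(r)·e^{Λr}/s_c(r)^{n-1}` is monotone
nondecreasing on `(0,R)`. -/
theorem density_ratio_monotone (c Λ : ℝ) (n : ℕ) (hn : 2 ≤ n) (R : ℝ) (hR : 0 < R)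
    (hRc : 0 < c → R ≤ Real.pi / Real.sqrt c)
    (σ σ' : ℝ → ℝ)
    (hσpos : ∀ r ∈ Set.Ioo (0 : ℝ) R, 0 < σ r)
    (hσderiv : ∀ r ∈ Set.Ioo (0 : ℝ) R, HasDerivAt σ (σ' r) r)
    (hineq : ∀ r ∈ Set.Ioo (0 : ℝ) R, ((n : ℝ) - 1) * ctc c r - Λ ≤ σ' r / σ r) :
    MonotoneOn (fun r => σ r * Real.exp (Λ * r) / (sc c r) ^ (n - 1))
      (Set.Ioo (0 : ℝ) R) :=
  density_ratio_monotone_general c Λ n hn R hRc σ σ' hσpos hσderiv hineq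
end

section
/- Let c, Λ ∈ ℝ, let n ≥ 2 be an integer, and let R > 0, with R ≤ π/√c in case c > 0. Let σ : ℝ → ℝ be positive and differentiable on (0,R) and satisfy σ'(r)/σ(r) ≤ (n−1)·ct_c(r) + Λ for all r ∈ (0,R). Then the function r ↦ σ(r)·e^{−Λr}/s_c(r)^{n−1} is monotone nonincreasing on (0,R). -/
/-!
The ratio is `f / g` with `f = σ·e^{-Λr}` and `g = s_c^{n-1}`. Since `(log s_c)' = ct_c`, the
hypothesis says precisely that the logarithmic derivative of `f` is at most that of `g`; as
`f, g > 0` on `(0, R)` (where `√c·r < π`), this makes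
`(f / g)' = f g ((log f)' - (log g)') / g² ≤ 0`.
-/

noncomputable def scDeriv (c t : ℝ) : ℝ :=
  if 0 < c then Real.sqrt c * Real.cos (Real.sqrt c * t)
  else if c = 0 then 1
  else Real.sqrt (-c) * Real.cosh (Real.sqrt (-c) * t)

theorem hasDerivAt_sc_s7 (c t : ℝ) : HasDerivAt (sc c) (scDeriv c t) t := by
  unfold sc scDeriv
  split_ifs
  · simpa [mul_comm] using ((hasDerivAt_id t).const_mul (Real.sqrt c)).sin
  · exact hasDerivAt_id' t
  · simpa [mul_comm] using ((hasDerivAt_id t).const_mul (Real.sqrt (-c))).sinh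

theorem logDeriv_sc (c t : ℝ) : logDeriv (sc c) t = ctc c t := by
  rw [logDeriv_apply, (hasDerivAt_sc_s7 c t).deriv]
  unfold sc scDeriv ctc
  split_ifs <;> ring

theorem sc_pos_s7 {c t : ℝ} (ht : 0 < t) (htc : 0 < c → t < Real.pi / Real.sqrt c) :
    0 < sc c t := by
  unfold sc
  split_ifs with hc hc'
  · have hsqrt : 0 < Real.sqrt c := Real.sqrt_pos.mpr hc
    exact Real.sin_pos_of_pos_of_lt_pi (by positivity) ((lt_div_iff₀' hsqrt).mp (htc hc))
  · exact ht
  · have hsqrt : 0 < Real.sqrt (-c) := Real.sqrt_pos.mpr (by grind)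
    exact Real.sinh_pos_iff.mpr (by positivity)

theorem antitoneOn_div_of_logDeriv_le {f g : ℝ → ℝ} {s : Set ℝ} (hs : Convex ℝ s)
    (hf : ∀ x ∈ s, DifferentiableAt ℝ f x) (hg : ∀ x ∈ s, DifferentiableAt ℝ g x)
    (hfpos : ∀ x ∈ s, 0 < f x) (hgpos : ∀ x ∈ s, 0 < g x)
    (hle : ∀ x ∈ s, logDeriv f x ≤ logDeriv g x) :
    AntitoneOn (fun x => f x / g x) s := by
  have hderiv : ∀ x ∈ s, HasDerivAt (fun x => f x / g x)
      ((deriv f x * g x - f x * deriv g x) / g x ^ 2) x := fun x hx =>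
    (hf x hx).hasDerivAt.div (hg x hx).hasDerivAt (hgpos x hx).ne'
  refine antitoneOn_of_hasDerivWithinAt_nonpos hs
    (fun x hx => (hderiv x hx).continuousAt.continuousWithinAt)
    (fun x hx => (hderiv x (interior_subset hx)).hasDerivWithinAt) fun x hx => ?_
  have hx := interior_subset hx
  have hnum : deriv f x * g x - f x * deriv g x = f x * g x * (logDeriv f x - logDeriv g x) := by
    rw [logDeriv_apply, logDeriv_apply]
    field_simp [(hfpos x hx).ne', (hgpos x hx).ne']
  have hfx := hfpos x hx
  have hgx := hgpos x hx
  rw [hnum]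
  exact div_nonpos_of_nonpos_of_nonneg
    (mul_nonpos_of_nonneg_of_nonpos (by positivity) (sub_nonpos.mpr (hle x hx))) (by positivity)

theorem density_ratio_antitone_general (c Λ : ℝ) (n : ℕ) (hn : 2 ≤ n) (R : ℝ)
    (hRc : 0 < c → R ≤ Real.pi / Real.sqrt c)
    (σ σ' : ℝ → ℝ)
    (hσpos : ∀ r ∈ Set.Ioo (0 : ℝ) R, 0 < σ r)
    (hσderiv : ∀ r ∈ Set.Ioo (0 : ℝ) R, HasDerivAt σ (σ' r) r)
    (hineq : ∀ r ∈ Set.Ioo (0 : ℝ) R, σ' r / σ r ≤ ((n : ℝ) - 1) * ctc c r + Λ) :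
    AntitoneOn (fun r => σ r * Real.exp (-Λ * r) / (sc c r) ^ (n - 1))
      (Set.Ioo (0 : ℝ) R) := by
  have hsc_pos : ∀ r ∈ Set.Ioo (0 : ℝ) R, 0 < sc c r := fun r hr =>
    sc_pos_s7 hr.1 fun hc => hr.2.trans_le (hRc hc)
  have hexp : ∀ r, HasDerivAt (fun r => Real.exp (-Λ * r)) (Real.exp (-Λ * r) * -Λ) r :=
    fun r => by simpa using ((hasDerivAt_id r).const_mul (-Λ)).exp
  refine antitoneOn_div_of_logDeriv_le (convex_Ioo 0 R)
    (fun r hr => ((hσderiv r hr).fun_mul (hexp r)).differentiableAt)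
    (fun r _ => (hasDerivAt_sc_s7 c r).differentiableAt.pow _)
    (fun r hr => mul_pos (hσpos r hr) (Real.exp_pos _))
    (fun r hr => pow_pos (hsc_pos r hr) _) fun r hr => ?_
  have hlog_num : logDeriv (fun r => σ r * Real.exp (-Λ * r)) r = σ' r / σ r - Λ := by
    rw [logDeriv_apply, ((hσderiv r hr).fun_mul (hexp r)).deriv]
    field_simp [(hσpos r hr).ne', (Real.exp_pos (-Λ * r)).ne']
    ring
  rw [hlog_num, logDeriv_fun_pow (hasDerivAt_sc_s7 c r).differentiableAt, logDeriv_sc,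
    Nat.cast_sub (by omega : 1 ≤ n), Nat.cast_one]
  linarith [hineq r hr]

/-- **Monotonicity step in Theorem 6.3.** Let `c, Λ ∈ ℝ`, `n ≥ 2`, `R > 0` with
`R ≤ π/√c` if `c > 0`.  If `σ > 0` is differentiable on `(0,R)` with
`σ'/σ ≤ (n-1)·ct_c + Λ` there, then `r ↦ σ(r)·e^{-Λr}/s_c(r)^{n-1}` is monotone
nonincreasing on `(0,R)`. -/
theorem density_ratio_antitone (c Λ : ℝ) (n : ℕ) (hn : 2 ≤ n) (R : ℝ) (hR : 0 < R)
    (hRc : 0 < c → R ≤ Real.pi / Real.sqrt c)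
    (σ σ' : ℝ → ℝ)
    (hσpos : ∀ r ∈ Set.Ioo (0 : ℝ) R, 0 < σ r)
    (hσderiv : ∀ r ∈ Set.Ioo (0 : ℝ) R, HasDerivAt σ (σ' r) r)
    (hineq : ∀ r ∈ Set.Ioo (0 : ℝ) R, σ' r / σ r ≤ ((n : ℝ) - 1) * ctc c r + Λ) :
    AntitoneOn (fun r => σ r * Real.exp (-Λ * r) / (sc c r) ^ (n - 1))
      (Set.Ioo (0 : ℝ) R) :=
  density_ratio_antitone_general c Λ n hn R hRc σ σ' hσpos hσderiv hineq
end

section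
/- Let F be a Minkowski norm on ℝⁿ with reversibility λ and dual norm F*, let Ω ⊆ ℝⁿ be a bounded open set, and let X : ℝⁿ → ℝⁿ be a continuously differentiable vector field and m, δ > 0 constants such that F(X(x)) ≤ m and div X(x) := ∑ᵢ ∂Xⁱ/∂xⁱ(x) ≥ δ for all x ∈ Ω. Then for every smooth function f : ℝⁿ → ℝ with compact support contained in Ω, ∫_Ω (F*(Df(x)))² dx ≥ (δ/(2λm))² · ∫_Ω f(x)² dx, where Df(x) ∈ (ℝⁿ)* is the Fréchet derivative of f at x and dx is Lebesgue measure. -/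
open MeasureTheory Set Function Metric

lemma clm_eq_sum_aux (n : ℕ) (ξ : (Fin n → ℝ) →L[ℝ] ℝ) (y : Fin n → ℝ) :
    ξ y = ∑ i, y i * ξ (Pi.single i 1) := by
  have hy : y = ∑ i, y i • (Pi.single i 1 : Fin n → ℝ) := by
    funext j
    simp [Finset.sum_apply, Pi.single_apply]
  conv_lhs => rw [hy]
  rw [map_sum]
  simp [smul_eq_mul]

lemma integral_div_eq_zero_aux (n : ℕ) (V : (Fin (n+1) → ℝ) → (Fin (n+1) → ℝ))
    (V' : (Fin (n+1) → ℝ) → ((Fin (n+1) → ℝ) →L[ℝ] (Fin (n+1) → ℝ)))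
    (hV : ∀ x, HasFDerivAt V (V' x) x) (hVc : Continuous V)
    (hsupp : HasCompactSupport V)
    (hdc : Continuous fun x => ∑ i, V' x (Pi.single i 1) i) :
    ∫ x, ∑ i, V' x (Pi.single i 1) i = 0 := by
  obtain ⟨R, hR0, hR⟩ := hsupp.isBounded.subset_ball_lt 0 0
  set a : Fin (n+1) → ℝ := fun _ => -R with ha
  set b : Fin (n+1) → ℝ := fun _ => R with hb
  have hle : a ≤ b := fun i => by simp [ha, hb]; linarith
  have hVz : ∀ y : Fin (n+1) → ℝ, ∀ i, R ≤ |y i| → V y = 0 := by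
    intro y i hi
    have : y ∉ ball (0 : Fin (n+1) → ℝ) R := by
      simp only [mem_ball, dist_zero_right]
      have := norm_le_pi_norm y i
      simp only [Real.norm_eq_abs] at this
      linarith
    have : y ∉ tsupport V := fun h => this (hR h)
    exact image_eq_zero_of_notMem_tsupport this
  have hIcc : ∀ x : Fin (n+1) → ℝ, x ∉ Icc a b → (∑ i, V' x (Pi.single i 1) i) = 0 := by
    intro x hx
    have hxs : x ∉ tsupport V := by
      intro hmem
      apply hx
      have := hR hmem
      simp only [mem_ball, dist_zero_right] at this
      constructor <;> intro i <;>
      · have h2 := norm_le_pi_norm x i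
        simp only [Real.norm_eq_abs] at h2
        simp only [ha, hb]
        cases abs_le.1 (le_of_lt (lt_of_le_of_lt h2 this)) with
        | intro h3 h4 => first | linarith | linarith
    have hfz : fderiv ℝ V x = 0 := by
      by_contra h
      exact hxs (support_fderiv_subset ℝ (f := V) h)
    have : V' x = 0 := by rw [← (hV x).fderiv, hfz]
    simp [this]
  have h1 : ∫ x, ∑ i, V' x (Pi.single i 1) i = ∫ x in Icc a b, ∑ i, V' x (Pi.single i 1) i :=
    (setIntegral_eq_integral_of_forall_compl_eq_zero hIcc).symm
  have h2 := integral_divergence_of_hasFDerivAt_off_countable a b hle V V' ∅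
    countable_empty hVc.continuousOn (fun x _ => hV x)
    (hdc.continuousOn.integrableOn_compact isCompact_Icc)
  rw [h1, h2]
  refine Finset.sum_eq_zero fun i _ => ?_
  have hfront : ∀ x : Fin n → ℝ, V (i.insertNth (b i) x) i = 0 := fun x => by
    rw [hVz _ i (by simp [hb, Fin.insertNth_apply_same, abs_of_pos hR0])]; rfl
  have hback : ∀ x : Fin n → ℝ, V (i.insertNth (a i) x) i = 0 := fun x => by
    rw [hVz _ i (by simp [ha, Fin.insertNth_apply_same, abs_of_pos hR0])]; rfl
  simp [hfront, hback]

lemma young_aux (d L a b : ℝ) (hd : 0 < d) :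
    2 * L * (a * b) ≤ d / 2 * a ^ 2 + 2 * L ^ 2 / d * b ^ 2 := by
  have key : d / 2 * a ^ 2 + 2 * L ^ 2 / d * b ^ 2 - 2 * L * (a * b)
      = (d * a - 2 * L * b) ^ 2 / (2 * d) := by
    field_simp
    ring
  nlinarith [sq_nonneg (d * a - 2 * L * b), div_nonneg (sq_nonneg (d * a - 2 * L * b)) (by linarith : (0:ℝ) ≤ 2 * d)]

set_option maxHeartbeats 1000000 in
/-- **Lemma 7.2 (Poincaré-type inequality), Minkowski setting.** Let `F` be a Minkowski
norm on `ℝⁿ` with reversibility `λ = ⨆_{x ≠ 0} F(-x)/F(x)` and dual norm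
`F*(ξ) = ⨆_{x ≠ 0} ξ(x)/F(x)`, let `Ω ⊆ ℝⁿ` be a bounded open set, and let `X` be a
`C¹` vector field with `F(X) ≤ m` and `div X = ∑ᵢ ∂Xⁱ/∂xⁱ ≥ δ > 0` on `Ω`.  Then for
every smooth `f` compactly supported in `Ω`,
`∫_Ω (F*(Df))² ≥ (δ/(2λm))² ∫_Ω f²`. -/
theorem first_eigenvalue_lower_bound (n : ℕ) (F : (Fin n → ℝ) → ℝ)
    (hFcont : Continuous F)
    (hFpos : ∀ x : Fin n → ℝ, x ≠ 0 → 0 < F x)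
    (hFhom : ∀ t : ℝ, 0 < t → ∀ x : Fin n → ℝ, F (t • x) = t * F x)
    (lam : ℝ)
    (hlam : lam = ⨆ x : {x : Fin n → ℝ // x ≠ 0}, F (-(x : Fin n → ℝ)) / F (x : Fin n → ℝ))
    (Fstar : ((Fin n → ℝ) →L[ℝ] ℝ) → ℝ)
    (hFstar : ∀ ξ : (Fin n → ℝ) →L[ℝ] ℝ,
      Fstar ξ = ⨆ x : {x : Fin n → ℝ // x ≠ 0}, ξ (x : Fin n → ℝ) / F (x : Fin n → ℝ))
    (Ω : Set (Fin n → ℝ)) (hΩopen : IsOpen Ω) (hΩbdd : Bornology.IsBounded Ω)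
    (X : (Fin n → ℝ) → (Fin n → ℝ)) (hX : ContDiff ℝ 1 X)
    (m δ : ℝ) (hm : 0 < m) (hδ : 0 < δ)
    (hXbound : ∀ x ∈ Ω, F (X x) ≤ m)
    (hdiv : ∀ x ∈ Ω, δ ≤ ∑ i, fderiv ℝ X x (Pi.single i 1) i)
    (f : (Fin n → ℝ) → ℝ) (hf : ContDiff ℝ (⊤ : ℕ∞) f)
    (hfsupp : HasCompactSupport f) (hfΩ : tsupport f ⊆ Ω) :
    (δ / (2 * lam * m)) ^ 2 * ∫ x in Ω, (f x) ^ 2 ≤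
      ∫ x in Ω, (Fstar (fderiv ℝ f x)) ^ 2 := by
  have hRHS_nonneg : 0 ≤ ∫ x in Ω, (Fstar (fderiv ℝ f x)) ^ 2 :=
    integral_nonneg fun x => sq_nonneg _
  cases n with
  | zero =>
    have hempty : IsEmpty {x : Fin 0 → ℝ // x ≠ 0} :=
      ⟨fun ⟨x, hx⟩ => hx (Subsingleton.elim x 0)⟩
    have hlam0 : lam = 0 := by
      rw [hlam, Real.iSup_of_isEmpty]
    rw [hlam0]
    simp only [mul_zero, zero_mul, div_zero, ne_eq, OfNat.ofNat_ne_zero,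
      not_false_eq_true, zero_pow]
    simpa using hRHS_nonneg
  | succ k =>
    have hF0 : F 0 = 0 := by
      have h2 := hFhom 2 (by norm_num) 0
      simp only [smul_zero] at h2
      linarith
    obtain ⟨z, hzS, hzmin⟩ :=
      (isCompact_sphere (0 : Fin (k+1) → ℝ) 1).exists_isMinOn
        (NormedSpace.sphere_nonempty.2 zero_le_one) hFcont.continuousOn
    obtain ⟨w, hwS, hwmax⟩ :=
      (isCompact_sphere (0 : Fin (k+1) → ℝ) 1).exists_isMaxOn
        (NormedSpace.sphere_nonempty.2 zero_le_one) hFcont.continuousOn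
    have hzn : z ≠ 0 := by
      rw [mem_sphere_iff_norm, sub_zero] at hzS
      intro h; rw [h] at hzS; simp at hzS
    set c := F z with hcdef
    set C := F w with hCdef
    have hc : 0 < c := hFpos z hzn
    have hlow : ∀ x : Fin (k+1) → ℝ, c * ‖x‖ ≤ F x := by
      intro x
      rcases eq_or_ne x 0 with rfl | hx
      · simp [hF0]
      · have hn : 0 < ‖x‖ := norm_pos_iff.2 hx
        have hu : (‖x‖⁻¹ • x) ∈ sphere (0 : Fin (k+1) → ℝ) 1 := by
          rw [mem_sphere_iff_norm, sub_zero, norm_smul, norm_inv, norm_norm,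
            inv_mul_cancel₀ hn.ne']
        have h1 : c ≤ F (‖x‖⁻¹ • x) := hzmin hu
        have h2 := hFhom ‖x‖ hn (‖x‖⁻¹ • x)
        rw [smul_inv_smul₀ hn.ne'] at h2
        nlinarith
    have hupp : ∀ x : Fin (k+1) → ℝ, F x ≤ C * ‖x‖ := by
      intro x
      rcases eq_or_ne x 0 with rfl | hx
      · simp [hF0]
      · have hn : 0 < ‖x‖ := norm_pos_iff.2 hx
        have hu : (‖x‖⁻¹ • x) ∈ sphere (0 : Fin (k+1) → ℝ) 1 := by
          rw [mem_sphere_iff_norm, sub_zero, norm_smul, norm_inv, norm_norm,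
            inv_mul_cancel₀ hn.ne']
        have h1 : F (‖x‖⁻¹ • x) ≤ C := hwmax hu
        have h2 := hFhom ‖x‖ hn (‖x‖⁻¹ • x)
        rw [smul_inv_smul₀ hn.ne'] at h2
        nlinarith
    have hwn : w ≠ 0 := by
      rw [mem_sphere_iff_norm, sub_zero] at hwS
      intro h; rw [h] at hwS; simp at hwS
    have hC : 0 < C := hFpos w hwn
    have hbddlam : BddAbove (range fun x : {x : Fin (k+1) → ℝ // x ≠ 0} =>
        F (-(x : Fin (k+1) → ℝ)) / F (x : Fin (k+1) → ℝ)) := by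
      refine ⟨C / c, ?_⟩
      rintro r ⟨⟨x, hx⟩, rfl⟩
      have hn : 0 < ‖x‖ := norm_pos_iff.2 hx
      have h1 : F (-x) ≤ C * ‖x‖ := by simpa using hupp (-x)
      have h2 : F (-x) / F x ≤ (C * ‖x‖) / (c * ‖x‖) :=
        div_le_div₀ (mul_nonneg hC.le (norm_nonneg _)) h1 (by positivity) (hlow x)
      rwa [mul_div_mul_right _ _ hn.ne'] at h2
    have hlam_ub : ∀ x : Fin (k+1) → ℝ, x ≠ 0 → F (-x) ≤ lam * F x := by
      intro x hx
      have h := le_ciSup hbddlam ⟨x, hx⟩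
      rw [← hlam] at h
      exact (div_le_iff₀ (hFpos x hx)).1 h
    have hlam1 : 1 ≤ lam := by
      have h1 := hlam_ub z hzn
      have h2 := hlam_ub (-z) (neg_ne_zero.2 hzn)
      rw [neg_neg] at h2
      have hz1 : 0 < F z := hFpos z hzn
      have hz2 : 0 < F (-z) := hFpos _ (neg_ne_zero.2 hzn)
      nlinarith
    have hlampos : 0 < lam := lt_of_lt_of_le one_pos hlam1
    have hbddstar : ∀ ξ : (Fin (k+1) → ℝ) →L[ℝ] ℝ,
        BddAbove (range fun x : {x : Fin (k+1) → ℝ // x ≠ 0} =>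
          ξ (x : Fin (k+1) → ℝ) / F (x : Fin (k+1) → ℝ)) := by
      intro ξ
      refine ⟨‖ξ‖ / c, ?_⟩
      rintro r ⟨⟨x, hx⟩, rfl⟩
      have hn : 0 < ‖x‖ := norm_pos_iff.2 hx
      have h1 : ξ x ≤ ‖ξ‖ * ‖x‖ := (le_abs_self _).trans (ξ.le_opNorm x)
      have h2 : ξ x / F x ≤ (‖ξ‖ * ‖x‖) / (c * ‖x‖) :=
        div_le_div₀ (by positivity) h1 (by positivity) (hlow x)
      rwa [mul_div_mul_right _ _ hn.ne'] at h2
    have hstar_ge : ∀ ξ : (Fin (k+1) → ℝ) →L[ℝ] ℝ, ∀ x : Fin (k+1) → ℝ, x ≠ 0 →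
        ξ x / F x ≤ Fstar ξ := by
      intro ξ x hx
      rw [hFstar]
      exact le_ciSup (hbddstar ξ) ⟨x, hx⟩
    have hstar_nonneg : ∀ ξ : (Fin (k+1) → ℝ) →L[ℝ] ℝ, 0 ≤ Fstar ξ := by
      intro ξ
      rcases le_or_gt 0 (ξ z) with h | h
      · exact le_trans (div_nonneg h (hFpos z hzn).le) (hstar_ge ξ z hzn)
      · refine le_trans (div_nonneg ?_ (hFpos _ (neg_ne_zero.2 hzn)).le)
          (hstar_ge ξ (-z) (neg_ne_zero.2 hzn))
        rw [map_neg]; linarith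
    have hstar_le : ∀ ξ : (Fin (k+1) → ℝ) →L[ℝ] ℝ, Fstar ξ ≤ ‖ξ‖ / c := by
      intro ξ
      rw [hFstar]
      have : Nonempty {x : Fin (k+1) → ℝ // x ≠ 0} := ⟨⟨z, hzn⟩⟩
      refine ciSup_le ?_
      rintro ⟨x, hx⟩
      have hn : 0 < ‖x‖ := norm_pos_iff.2 hx
      have h1 : ξ x ≤ ‖ξ‖ * ‖x‖ := (le_abs_self _).trans (ξ.le_opNorm x)
      have h2 : ξ x / F x ≤ (‖ξ‖ * ‖x‖) / (c * ‖x‖) :=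
        div_le_div₀ (by positivity) h1 (by positivity) (hlow x)
      rwa [mul_div_mul_right _ _ hn.ne'] at h2
    -- key pointwise bound
    have hkey : ∀ x ∈ Ω, |fderiv ℝ f x (X x)| ≤ lam * m * Fstar (fderiv ℝ f x) := by
      intro x hx
      have hs0 := hstar_nonneg (fderiv ℝ f x)
      have hFX : F (X x) ≤ m := hXbound x hx
      rcases eq_or_ne (X x) 0 with h0 | h0
      · rw [h0, map_zero, abs_zero]
        positivity
      · have hFXpos : 0 < F (X x) := hFpos _ h0
        rw [abs_le]
        constructor
        · have h1 : fderiv ℝ f x (-(X x)) ≤ Fstar (fderiv ℝ f x) * F (-(X x)) :=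
            (div_le_iff₀ (hFpos _ (neg_ne_zero.2 h0))).1
              (hstar_ge (fderiv ℝ f x) (-(X x)) (neg_ne_zero.2 h0))
          have h2 : F (-(X x)) ≤ lam * F (X x) := hlam_ub (X x) h0
          rw [map_neg] at h1
          nlinarith [mul_le_mul_of_nonneg_left h2 hs0,
            mul_le_mul_of_nonneg_left hFX (mul_nonneg (by linarith : (0:ℝ) ≤ lam) hs0)]
        · have h1 : fderiv ℝ f x (X x) ≤ Fstar (fderiv ℝ f x) * F (X x) :=
            (div_le_iff₀ hFXpos).1 (hstar_ge (fderiv ℝ f x) (X x) h0)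
          nlinarith [mul_le_mul_of_nonneg_left hFX hs0,
            mul_le_mul_of_nonneg_right hlam1 (mul_nonneg hs0 hm.le)]
    -- measurability of x ↦ Fstar (Df x)
    have hDfc : Continuous fun x => fderiv ℝ f x := hf.continuous_fderiv (by simp)
    have hgmeas : Measurable fun x => Fstar (fderiv ℝ f x) := by
      have hrw : (fun x => Fstar (fderiv ℝ f x))
          = fun x => ⨆ y : {y : Fin (k+1) → ℝ // y ≠ 0},
              (fderiv ℝ f x) (y : Fin (k+1) → ℝ) / F (y : Fin (k+1) → ℝ) :=
        funext fun x => hFstar _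
      rw [hrw]
      apply LowerSemicontinuous.measurable
      apply lowerSemicontinuous_ciSup
      · intro x; exact hbddstar _
      · rintro ⟨y, hy⟩
        exact ((hDfc.clm_apply continuous_const).div_const _).lowerSemicontinuous
    -- differentiability data
    have hfc := hf.continuous
    have hfd : ∀ x, HasFDerivAt f (fderiv ℝ f x) x :=
      fun x => (hf.differentiable (by simp) x).hasFDerivAt
    have hXd : ∀ x, HasFDerivAt X (fderiv ℝ X x) x :=
      fun x => (hX.differentiable one_ne_zero x).hasFDerivAt
    have hXc := hX.continuous
    have hdXc : Continuous fun x => fderiv ℝ X x := hX.continuous_fderiv one_ne_zero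
    -- the vector field V = f² • X and its derivative
    set V : (Fin (k+1) → ℝ) → (Fin (k+1) → ℝ) := fun x => (f x ^ 2) • X x with hVdef
    set V' : (Fin (k+1) → ℝ) → ((Fin (k+1) → ℝ) →L[ℝ] (Fin (k+1) → ℝ)) :=
      fun x => (f x ^ 2) • fderiv ℝ X x
        + ((f x • fderiv ℝ f x + f x • fderiv ℝ f x).smulRight (X x)) with hV'def
    have hVd : ∀ x, HasFDerivAt V (V' x) x := by
      intro x
      have h2 : HasFDerivAt (fun y => f y ^ 2)
          (f x • fderiv ℝ f x + f x • fderiv ℝ f x) x := by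
        have h := (hfd x).mul (hfd x)
        simp only [Pi.mul_def] at h
        simpa [pow_two] using h
      exact h2.smul (hXd x)
    have hVc : Continuous V := (hfc.pow 2).smul hXc
    have hVsupp : HasCompactSupport V :=
      hfsupp.mono fun x hx h0 => hx (by simp [hVdef, h0])
    have hdiv_eq : ∀ x, (∑ i, V' x (Pi.single i 1) i)
        = f x ^ 2 * (∑ i, fderiv ℝ X x (Pi.single i 1) i)
          + 2 * f x * (fderiv ℝ f x (X x)) := by
      intro x
      rw [clm_eq_sum_aux _ (fderiv ℝ f x) (X x)]
      simp only [hV'def, ContinuousLinearMap.add_apply, ContinuousLinearMap.coe_smul',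
        Pi.smul_apply, ContinuousLinearMap.smulRight_apply, Pi.add_apply, smul_eq_mul]
      rw [Finset.mul_sum, Finset.mul_sum, ← Finset.sum_add_distrib]
      exact Finset.sum_congr rfl fun i _ => by ring
    have hdivc : Continuous fun x => ∑ i, V' x (Pi.single i 1) i := by
      rw [show (fun x => ∑ i, V' x (Pi.single i 1) i)
          = fun x => f x ^ 2 * (∑ i, fderiv ℝ X x (Pi.single i 1) i)
            + 2 * f x * (fderiv ℝ f x (X x)) from funext hdiv_eq]
      apply Continuous.add
      · exact (hfc.pow 2).mul (continuous_finset_sum _ fun i _ =>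
          (continuous_apply i).comp (hdXc.clm_apply continuous_const))
      · exact (continuous_const.mul hfc).mul (hDfc.clm_apply hXc)
    have hzero := integral_div_eq_zero_aux k V V' hVd hVc hVsupp hdivc
    simp only [hdiv_eq] at hzero
    -- splitting the integral
    have hAc : Continuous fun x => f x ^ 2 * (∑ i, fderiv ℝ X x (Pi.single i 1) i) :=
      (hfc.pow 2).mul (continuous_finset_sum _ fun i _ =>
        (continuous_apply i).comp (hdXc.clm_apply continuous_const))
    have hBc : Continuous fun x => 2 * f x * (fderiv ℝ f x (X x)) :=
      (continuous_const.mul hfc).mul (hDfc.clm_apply hXc)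
    have hAsupp : HasCompactSupport
        fun x => f x ^ 2 * (∑ i, fderiv ℝ X x (Pi.single i 1) i) :=
      hfsupp.mono fun x hx h0 => hx (by simp [h0])
    have hBsupp : HasCompactSupport fun x => 2 * f x * (fderiv ℝ f x (X x)) :=
      hfsupp.mono fun x hx h0 => hx (by simp [h0])
    have hAint : Integrable fun x => f x ^ 2 * (∑ i, fderiv ℝ X x (Pi.single i 1) i) :=
      hAc.integrable_of_hasCompactSupport hAsupp
    have hBint : Integrable fun x => 2 * f x * (fderiv ℝ f x (X x)) :=
      hBc.integrable_of_hasCompactSupport hBsupp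
    have hsplit : (∫ x, f x ^ 2 * (∑ i, fderiv ℝ X x (Pi.single i 1) i))
        + (∫ x, 2 * f x * (fderiv ℝ f x (X x))) = 0 := by
      rw [← integral_add hAint hBint]; exact hzero
    -- restrict to Ω
    have hout : ∀ x, x ∉ Ω → f x = 0 :=
      fun x hx => image_eq_zero_of_notMem_tsupport fun h => hx (hfΩ h)
    have hAeq : ∫ x in Ω, f x ^ 2 * (∑ i, fderiv ℝ X x (Pi.single i 1) i)
        = ∫ x, f x ^ 2 * (∑ i, fderiv ℝ X x (Pi.single i 1) i) :=
      setIntegral_eq_integral_of_forall_compl_eq_zero fun x hx => by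
        simp [hout x hx]
    have hBeq : ∫ x in Ω, 2 * f x * (fderiv ℝ f x (X x))
        = ∫ x, 2 * f x * (fderiv ℝ f x (X x)) :=
      setIntegral_eq_integral_of_forall_compl_eq_zero fun x hx => by
        simp [hout x hx]
    -- integrability on Ω
    have hf2int : Integrable fun x => f x ^ 2 :=
      (hfc.pow 2).integrable_of_hasCompactSupport
        (hfsupp.mono fun x hx h0 => hx (by simp [h0]))
    have hBd : Integrable fun x => (‖fderiv ℝ f x‖ / c) ^ 2 :=
      by
        have h2 : HasCompactSupport fun x => (‖fderiv ℝ f x‖ / c) ^ 2 := by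
          have h : HasCompactSupport (fderiv ℝ f) := hfsupp.fderiv (𝕜 := ℝ)
          exact h.comp_left (g := fun ξ : (Fin (k+1) → ℝ) →L[ℝ] ℝ => (‖ξ‖ / c) ^ 2) (by simp)
        have h3 : Continuous fun x => (‖fderiv ℝ f x‖ / c) ^ 2 := ((hDfc.norm).div_const c).pow 2
        exact h3.integrable_of_hasCompactSupport h2
    have hgsqint : IntegrableOn (fun x => (Fstar (fderiv ℝ f x)) ^ 2) Ω := by
      refine Integrable.mono' hBd.integrableOn
        ((hgmeas.pow_const 2).aestronglyMeasurable.restrict) (ae_of_all _ fun x => ?_)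
      rw [Real.norm_eq_abs, abs_of_nonneg (sq_nonneg _)]
      exact pow_le_pow_left₀ (hstar_nonneg _) (hstar_le _) 2
    -- step 1
    have hIA1 : δ * ∫ x in Ω, f x ^ 2
        ≤ ∫ x in Ω, f x ^ 2 * (∑ i, fderiv ℝ X x (Pi.single i 1) i) := by
      rw [← integral_const_mul]
      refine setIntegral_mono_on ((hf2int.const_mul δ).integrableOn)
        (hAint.integrableOn) hΩopen.measurableSet fun x hx => ?_
      have := hdiv x hx
      nlinarith [sq_nonneg (f x)]
    -- step 2: combine with the divergence identity
    have hIA2 : ∫ x in Ω, f x ^ 2 * (∑ i, fderiv ℝ X x (Pi.single i 1) i)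
        = ∫ x in Ω, -(2 * f x * (fderiv ℝ f x (X x))) := by
      rw [hAeq, integral_neg, hBeq]
      linarith [hsplit]
    -- step 3: pointwise Young inequality
    have hIA3 : ∫ x in Ω, -(2 * f x * (fderiv ℝ f x (X x)))
        ≤ ∫ x in Ω, (δ/2 * f x ^ 2
            + 2*(lam*m)^2/δ * (Fstar (fderiv ℝ f x))^2) := by
      refine setIntegral_mono_on (hBint.neg.integrableOn)
        (((hf2int.const_mul (δ/2)).integrableOn).add (hgsqint.const_mul _))
        hΩopen.measurableSet fun x hx => ?_
      have h1 := hkey x hx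
      have h2 := young_aux δ (lam*m) |f x| (Fstar (fderiv ℝ f x)) hδ
      have h3 := hstar_nonneg (fderiv ℝ f x)
      calc -(2 * f x * (fderiv ℝ f x (X x)))
          ≤ |2 * f x * (fderiv ℝ f x (X x))| := neg_le_abs _
        _ = 2 * (|f x| * |fderiv ℝ f x (X x)|) := by
            rw [abs_mul, abs_mul, abs_two]; ring
        _ ≤ 2 * (|f x| * (lam * m * Fstar (fderiv ℝ f x))) := by
            gcongr
        _ = 2 * (lam*m) * (|f x| * Fstar (fderiv ℝ f x)) := by ring
        _ ≤ δ/2 * |f x|^2 + 2*(lam*m)^2/δ * (Fstar (fderiv ℝ f x))^2 := h2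
        _ = δ/2 * f x ^2 + 2*(lam*m)^2/δ * (Fstar (fderiv ℝ f x))^2 := by
            rw [sq_abs]
    -- step 4: evaluate the right-hand side
    have hIA4 : ∫ x in Ω, (δ/2 * f x ^ 2
            + 2*(lam*m)^2/δ * (Fstar (fderiv ℝ f x))^2)
        = δ/2 * (∫ x in Ω, f x ^ 2)
            + 2*(lam*m)^2/δ * ∫ x in Ω, (Fstar (fderiv ℝ f x))^2 := by
      rw [integral_add ((hf2int.const_mul (δ/2)).integrableOn) (hgsqint.const_mul _),
        integral_const_mul, integral_const_mul]
    have hlm : 0 < lam * m := mul_pos hlampos hm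
    have hmain : δ/2 * (∫ x in Ω, f x ^ 2)
        ≤ 2*(lam*m)^2/δ * ∫ x in Ω, (Fstar (fderiv ℝ f x))^2 := by
      have := hIA1.trans (le_of_eq hIA2) |>.trans (hIA3.trans (le_of_eq hIA4))
      linarith
    have hscale := mul_le_mul_of_nonneg_left hmain
      (le_of_lt (show 0 < δ/(2*(lam*m)^2) by positivity))
    calc (δ / (2 * lam * m)) ^ 2 * ∫ x in Ω, (f x) ^ 2
        = δ/(2*(lam*m)^2) * (δ/2 * ∫ x in Ω, f x ^ 2) := by
          field_simp
      _ ≤ δ/(2*(lam*m)^2) * (2*(lam*m)^2/δ * ∫ x in Ω, (Fstar (fderiv ℝ f x))^2) := hscale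
      _ = ∫ x in Ω, (Fstar (fderiv ℝ f x)) ^ 2 := by
          field_simp
end
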